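/- Let M be a bridgeless matroid with costs such that all 2^{|A|} sums of costs over distinct subsets of elements are distinct, let F be an independent set, and let S* be the (unique) minimum basis. Then F ⊆ S* if and only if c(a) ≤ V(F,a) for all a ∈ F. Moreover (for arbitrary costs), F ⊆ S* implies c(a) ≤ V(F,a) for all a ∈ F, and conversely c(a) < V(F,a) for all a ∈ F implies F ⊆ S*. -/

import Mathlib

open MeasureTheory ProbabilityTheory ENNReal
open scoped BigOperators

variable {A : Type*} [Fintype A] [DecidableEq A]

/-- The nominal cost of a structure `S`: the sum of the item costs. -/
noncomputable def structCost (c : A → ℝ≥0∞) (S : Finset A) : ℝ≥0∞ :=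
  ∑ a ∈ S, c a

/-- The minimum cost `c*(I)` over all desired structures. -/
noncomputable def cstar (SS : Finset (Finset A)) (c : A → ℝ≥0∞) : ℝ≥0∞ :=
  ⨅ S ∈ SS, structCost c S

/-- The VCG threshold `v(I,a) = c*(I_a^∞) - c*(I_a^0)`. -/
noncomputable def vth (SS : Finset (Finset A)) (c : A → ℝ≥0∞) (a : A) : ℝ≥0∞ :=
  cstar SS (Function.update c a ⊤) - cstar SS (Function.update c a 0)

/-- The incentive payment `p(a) = c*(I_a^∞) - c*(I)`. -/
noncomputable def pay (SS : Finset (Finset A)) (c : A → ℝ≥0∞) (a : A) : ℝ≥0∞ :=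
  cstar SS (Function.update c a ⊤) - cstar SS c

/-- `S` is a minimum structure. -/
def IsMinStruct (SS : Finset (Finset A)) (c : A → ℝ≥0∞) (S : Finset A) : Prop :=
  S ∈ SS ∧ ∀ T ∈ SS, structCost c S ≤ structCost c T

/-- The total VCG cost `C_VCG = C* + Σ_a p(a)`. -/
noncomputable def cvcg (SS : Finset (Finset A)) (c : A → ℝ≥0∞) : ℝ≥0∞ :=
  cstar SS c + ∑ a, pay SS c a

/-- The cost function with all costs in `F` set to `0` and all costs in `E` set to `∞`. -/
noncomputable def setCosts (c : A → ℝ≥0∞) (F E : Finset A) : A → ℝ≥0∞ :=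
  fun a => if a ∈ E then ⊤ else if a ∈ F then 0 else c a

/-- The extended VCG threshold `V(F,a) = c*(I^{0,∞}_{F∖{a},{a}}) - c*(I^0_F)`. -/
noncomputable def extVth (SS : Finset (Finset A)) (c : A → ℝ≥0∞) (F : Finset A)
    (a : A) : ℝ≥0∞ :=
  cstar SS (setCosts c (F.erase a) {a}) - cstar SS (setCosts c F ∅)

/-- A matroid on finite ground set `A`, given by its rank function. -/
structure RankMatroid (A : Type*) [Fintype A] [DecidableEq A] where
  rk : Finset A → ℕ
  rk_le_card : ∀ S : Finset A, rk S ≤ S.card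
  rk_mono : ∀ ⦃S T : Finset A⦄, S ⊆ T → rk S ≤ rk T
  rk_submodular : ∀ S T : Finset A, rk (S ∪ T) + rk (S ∩ T) ≤ rk S + rk T

namespace RankMatroid

variable {A : Type*} [Fintype A] [DecidableEq A]

/-- The collection of bases of the matroid. -/
noncomputable def bases (M : RankMatroid A) : Finset (Finset A) :=
  Finset.univ.filter (fun S => M.rk S = S.card ∧ M.rk S = M.rk Finset.univ)

/-- A set is independent if its rank equals its cardinality. -/
def Indep (M : RankMatroid A) (S : Finset A) : Prop := M.rk S = S.card

/-- A matroid is bridgeless if no single element removal decreases the rank of the ground set. -/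
def Bridgeless (M : RankMatroid A) : Prop :=
  ∀ a : A, M.rk (Finset.univ.erase a) = M.rk Finset.univ

/-- `β(S)`: the number of bridges in `S`. -/
def beta (M : RankMatroid A) (S : Finset A) : ℕ :=
  (S.filter (fun a => M.rk (S.erase a) < M.rk S)).card

end RankMatroid

/-- `A(t)`: the set of items with cost at most `t`. -/
noncomputable def Aset {A : Type*} [Fintype A] [DecidableEq A] (c : A → ℝ) (t : ℝ) : Finset A :=
  Finset.univ.filter (fun a => c a ≤ t)

namespace RankMatroid
variable {M : RankMatroid A}

lemma mem_bases_iff {B : Finset A} :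
    B ∈ M.bases ↔ M.rk B = B.card ∧ M.rk B = M.rk Finset.univ := by
  simp [bases]

lemma rk_le_univ (S : Finset A) : M.rk S ≤ M.rk Finset.univ :=
  M.rk_mono (Finset.subset_univ S)

lemma rk_insert_le (S : Finset A) (x : A) : M.rk (insert x S) ≤ M.rk S + 1 := by
  have h := M.rk_submodular S {x}
  have h1 : M.rk {x} ≤ 1 := by simpa using M.rk_le_card {x}
  have h2 : S ∪ {x} = insert x S := by
    ext y; simp [or_comm]
  rw [h2] at h
  have h3 : S ∩ {x} ⊆ insert x S := by
    intro y hy; simp at hy; simp [hy]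
  omega

lemma indep_subset {S T : Finset A} (h : T ⊆ S) (hS : M.Indep S) : M.Indep T := by
  have key : ∀ U : Finset A, ∀ V : Finset A, M.rk (V ∪ U) ≤ M.rk V + U.card := by
    intro U
    induction U using Finset.induction_on with
    | empty => simp
    | @insert a s hx ih =>
      intro V
      rw [Finset.union_insert]
      calc M.rk (insert a (V ∪ s)) ≤ M.rk (V ∪ s) + 1 := rk_insert_le _ _
        _ ≤ M.rk V + s.card + 1 := by have := ih V; omega
        _ = M.rk V + (insert a s).card := by
              rw [Finset.card_insert_of_notMem hx]; omega
  have h1 : M.rk S ≤ M.rk T + (S \ T).card := by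
    have : T ∪ (S \ T) = S := Finset.union_sdiff_of_subset h
    calc M.rk S = M.rk (T ∪ (S \ T)) := by rw [this]
      _ ≤ M.rk T + (S \ T).card := key _ _
  have h2 : (S \ T).card = S.card - T.card := Finset.card_sdiff_of_subset h
  have h3 : T.card ≤ S.card := Finset.card_le_card h
  have h4 := M.rk_le_card T
  have h5 := hS
  unfold Indep at *
  omega

lemma rk_insert_union {S : Finset A} {x : A} (h : M.rk (insert x S) = M.rk S)
    (U : Finset A) : M.rk (insert x (S ∪ U)) = M.rk (S ∪ U) := by
  have hsub := M.rk_submodular (S ∪ U) (insert x S)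
  have e1 : (S ∪ U) ∪ insert x S = insert x (S ∪ U) := by ext y; simp; tauto
  have e2 : S ⊆ (S ∪ U) ∩ insert x S := by
    intro y hy; simp [hy]
  have h1 : M.rk S ≤ M.rk ((S ∪ U) ∩ insert x S) := M.rk_mono e2
  have h2 : M.rk (S ∪ U) ≤ M.rk (insert x (S ∪ U)) :=
    M.rk_mono (Finset.subset_insert _ _)
  rw [e1] at hsub
  omega

lemma rk_union_eq_of_forall {S T : Finset A}
    (h : ∀ x ∈ T, M.rk (insert x S) = M.rk S) : M.rk (S ∪ T) = M.rk S := by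
  induction T using Finset.induction_on with
  | empty => simp
  | @insert a s hx ih =>
    rw [Finset.union_insert, rk_insert_union (h a (by simp)) s,
      ih fun x hx => h x (by simp [hx])]

lemma exists_basis_supset {F : Finset A} (hF : M.Indep F) :
    ∃ B ∈ M.bases, F ⊆ B := by
  suffices H : ∀ n (F : Finset A), M.Indep F → M.rk Finset.univ ≤ M.rk F + n →
      ∃ B ∈ M.bases, F ⊆ B by
    exact H (M.rk Finset.univ) F hF (by omega)
  intro n
  induction n with
  | zero =>
    intro F hF hle
    refine ⟨F, ?_, le_refl _⟩
    rw [mem_bases_iff]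
    exact ⟨hF, le_antisymm (rk_le_univ F) (by omega)⟩
  | succ n ih =>
    intro F hF hle
    by_cases heq : M.rk F = M.rk Finset.univ
    · exact ⟨F, mem_bases_iff.2 ⟨hF, heq⟩, le_refl _⟩
    · have : ∃ x, M.rk (insert x F) ≠ M.rk F := by
        by_contra hcon
        push_neg at hcon
        have := rk_union_eq_of_forall (S := F) (T := Finset.univ)
          (fun x _ => hcon x)
        rw [Finset.union_eq_right.2 (Finset.subset_univ F)] at this
        exact heq this.symm
      obtain ⟨x, hx⟩ := this
      have hxF : x ∉ F := fun hm => hx (by rw [Finset.insert_eq_self.2 hm])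
      have hr1 : M.rk (insert x F) = M.rk F + 1 := by
        have := rk_insert_le (M := M) F x
        have := M.rk_mono (Finset.subset_insert x F)
        omega
      have hind : M.Indep (insert x F) := by
        unfold Indep at *
        rw [hr1, Finset.card_insert_of_notMem hxF, hF]
      obtain ⟨B, hB, hsub⟩ := ih (insert x F) hind (by omega)
      exact ⟨B, hB, (Finset.subset_insert x F).trans hsub⟩

lemma bases_nonempty : M.bases.Nonempty := by
  obtain ⟨B, hB, _⟩ := exists_basis_supset (M := M) (F := ∅)
    (by simp [Indep, Nat.le_zero.1 (M.rk_le_card ∅)])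
  exact ⟨B, hB⟩

/-- Existence of a circuit inside a dependent set. -/
lemma exists_circuit {T : Finset A} (hT : ¬ M.Indep T) :
    ∃ C ⊆ T, ¬ M.Indep C ∧ ∀ x ∈ C, M.Indep (C.erase x) := by
  classical
  have hne : (T.powerset.filter (fun C => ¬ M.Indep C)).Nonempty :=
    ⟨T, by simp [hT]⟩
  obtain ⟨C, hC, hmin⟩ := Finset.exists_min_image _ Finset.card hne
  simp only [Finset.mem_filter, Finset.mem_powerset] at hC
  refine ⟨C, hC.1, hC.2, ?_⟩
  intro x hx
  by_contra hdep
  have hmem : C.erase x ∈ T.powerset.filter (fun C => ¬ M.Indep C) := by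
    simp only [Finset.mem_filter, Finset.mem_powerset]
    exact ⟨(Finset.erase_subset _ _).trans hC.1, hdep⟩
  have := hmin _ hmem
  have := Finset.card_erase_of_mem hx
  have : C.card ≠ 0 := Finset.card_ne_zero_of_mem hx
  omega

lemma circuit_rk_erase {C : Finset A} (hdep : ¬ M.Indep C)
    (hmin : ∀ x ∈ C, M.Indep (C.erase x)) {x : A} (hx : x ∈ C) :
    M.rk (insert x (C.erase x)) = M.rk (C.erase x) := by
  rw [Finset.insert_erase hx]
  have h1 : M.rk (C.erase x) = C.card - 1 := by
    have := hmin x hx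
    unfold Indep at this
    rw [this, Finset.card_erase_of_mem hx]
  have h2 : M.rk C ≤ C.card := M.rk_le_card C
  have h3 : M.rk (C.erase x) ≤ M.rk C := M.rk_mono (Finset.erase_subset _ _)
  have h4 : M.rk C ≠ C.card := hdep
  have h5 : C.card ≠ 0 := Finset.card_ne_zero_of_mem hx
  omega

lemma basis_of_card_of_le {B : Finset A} (hcard : B.card = M.rk Finset.univ)
    (hrk : M.rk Finset.univ ≤ M.rk B) : B ∈ M.bases := by
  have h1 : M.rk B ≤ B.card := M.rk_le_card B
  have h2 : M.rk B ≤ M.rk Finset.univ := rk_le_univ B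
  rw [mem_bases_iff]; omega

lemma exchange_into_indep {B F : Finset A} (hB : B ∈ M.bases) {f : A}
    (hf : f ∉ B) (hF : M.Indep F) (hfF : f ∈ F) :
    ∃ b ∈ B, b ∉ F ∧ insert f (B.erase b) ∈ M.bases := by
  obtain ⟨hBi, hBr⟩ := mem_bases_iff.1 hB
  have hdep : ¬ M.Indep (insert f B) := by
    intro h
    have h1 : M.rk (insert f B) ≤ M.rk Finset.univ := rk_le_univ _
    have h2 : (insert f B).card = B.card + 1 := Finset.card_insert_of_notMem hf
    unfold Indep at h; omega
  obtain ⟨C, hCsub, hCdep, hCmin⟩ := exists_circuit hdep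
  have hfC : f ∈ C := by
    by_contra hfC
    refine hCdep (indep_subset ?_ hBi)
    intro x hx
    rcases Finset.mem_insert.1 (hCsub hx) with h | h
    · exact absurd (h ▸ hx) hfC
    · exact h
  have hbex : ∃ b ∈ C.erase f, b ∉ F := by
    by_contra hcon
    push_neg at hcon
    refine hCdep (indep_subset ?_ hF)
    intro x hx
    by_cases hxf : x = f
    · exact hxf ▸ hfF
    · exact hcon x (Finset.mem_erase.2 ⟨hxf, hx⟩)
  obtain ⟨b, hbCe, hbF⟩ := hbex
  have hbf : b ≠ f := (Finset.mem_erase.1 hbCe).1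
  have hbC : b ∈ C := Finset.mem_of_mem_erase hbCe
  have hbB : b ∈ B := by
    rcases Finset.mem_insert.1 (hCsub hbC) with h | h
    · exact absurd h hbf
    · exact h
  refine ⟨b, hbB, hbF, ?_⟩
  have hfB' : f ∉ B.erase b := fun h => hf (Finset.mem_of_mem_erase h)
  have hcard : (insert f (B.erase b)).card = B.card := by
    rw [Finset.card_insert_of_notMem hfB', Finset.card_erase_of_mem hbB]
    have : B.card ≠ 0 := Finset.card_ne_zero_of_mem hbB
    omega
  have hCsub' : C.erase b ⊆ insert f (B.erase b) := by
    intro x hx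
    obtain ⟨hxb, hxC⟩ := Finset.mem_erase.1 hx
    rcases Finset.mem_insert.1 (hCsub hxC) with h | h
    · simp [h]
    · exact Finset.mem_insert_of_mem (Finset.mem_erase.2 ⟨hxb, h⟩)
  have hkey := rk_insert_union (M := M) (S := C.erase b) (x := b)
      (circuit_rk_erase hCdep hCmin hbC) (insert f (B.erase b))
  rw [Finset.union_eq_right.2 hCsub'] at hkey
  have heq : insert b (insert f (B.erase b)) = insert f B := by
    rw [Finset.insert_comm, Finset.insert_erase hbB]
  rw [heq] at hkey
  have hmono : M.rk B ≤ M.rk (insert f B) := M.rk_mono (Finset.subset_insert _ _)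
  refine basis_of_card_of_le (by omega) (by omega)

lemma symmetric_exchange {B S : Finset A} (hB : B ∈ M.bases) (hS : S ∈ M.bases)
    {a : A} (haB : a ∈ B) (haS : a ∉ S) :
    ∃ b ∈ S, b ∉ B ∧ insert b (B.erase a) ∈ M.bases ∧
      insert a (S.erase b) ∈ M.bases := by
  obtain ⟨hBi, hBr⟩ := mem_bases_iff.1 hB
  obtain ⟨hSi, hSr⟩ := mem_bases_iff.1 hS
  have hdep : ¬ M.Indep (insert a S) := by
    intro h
    have h1 : M.rk (insert a S) ≤ M.rk Finset.univ := rk_le_univ _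
    have h2 : (insert a S).card = S.card + 1 := Finset.card_insert_of_notMem haS
    unfold Indep at h; omega
  obtain ⟨C, hCsub, hCdep, hCmin⟩ := exists_circuit hdep
  have haC : a ∈ C := by
    by_contra haC
    refine hCdep (indep_subset ?_ hSi)
    intro x hx
    rcases Finset.mem_insert.1 (hCsub hx) with h | h
    · exact absurd (h ▸ hx) haC
    · exact h
  have hBe : M.rk (B.erase a) = B.card - 1 := by
    have h := indep_subset (Finset.erase_subset a B) hBi
    unfold Indep at h
    rw [h, Finset.card_erase_of_mem haB]
  have hcB : B.card ≠ 0 := Finset.card_ne_zero_of_mem haB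
  have hbex : ∃ b ∈ C.erase a, M.rk (insert b (B.erase a)) ≠ M.rk (B.erase a) := by
    by_contra hcon
    push_neg at hcon
    have h1 : M.rk ((B.erase a) ∪ (C.erase a)) = M.rk (B.erase a) :=
      rk_union_eq_of_forall hcon
    have h2 := rk_insert_union (M := M) (S := C.erase a) (x := a)
        (circuit_rk_erase hCdep hCmin haC) (B.erase a)
    rw [Finset.union_comm (C.erase a) (B.erase a)] at h2
    have hBsub : B ⊆ insert a ((C.erase a) ∪ (B.erase a)) := by
      intro x hx
      by_cases hxa : x = a
      · simp [hxa]
      · exact Finset.mem_insert_of_mem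
          (Finset.mem_union_right _ (Finset.mem_erase.2 ⟨hxa, hx⟩))
    have h3 : M.rk B ≤ M.rk (insert a ((C.erase a) ∪ (B.erase a))) := M.rk_mono hBsub
    rw [Finset.union_comm (C.erase a) (B.erase a)] at h3
    omega
  obtain ⟨b, hbCe, hbne⟩ := hbex
  have hba : b ≠ a := (Finset.mem_erase.1 hbCe).1
  have hbC : b ∈ C := Finset.mem_of_mem_erase hbCe
  have hbS : b ∈ S := by
    rcases Finset.mem_insert.1 (hCsub hbC) with h | h
    · exact absurd h hba
    · exact h
  have hbB : b ∉ B := by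
    intro hb
    exact hbne (by rw [Finset.insert_eq_self.2 (Finset.mem_erase.2 ⟨hba, hb⟩)])
  have hbBe : b ∉ B.erase a := fun h => hbB (Finset.mem_of_mem_erase h)
  refine ⟨b, hbS, hbB, ?_, ?_⟩
  · have hle := rk_insert_le (M := M) (B.erase a) b
    have hge := M.rk_mono (Finset.subset_insert b (B.erase a))
    have hcard : (insert b (B.erase a)).card = B.card := by
      rw [Finset.card_insert_of_notMem hbBe, Finset.card_erase_of_mem haB]
      omega
    exact basis_of_card_of_le (by omega) (by omega)
  · have haSe : a ∉ insert a (S.erase b) → False := by simp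
    have hCe : C.erase b ⊆ insert a (S.erase b) := by
      intro x hx
      obtain ⟨hxb, hxC⟩ := Finset.mem_erase.1 hx
      rcases Finset.mem_insert.1 (hCsub hxC) with h | h
      · simp [h]
      · exact Finset.mem_insert_of_mem (Finset.mem_erase.2 ⟨hxb, h⟩)
    have hkey := rk_insert_union (M := M) (S := C.erase b) (x := b)
        (circuit_rk_erase hCdep hCmin hbC) (insert a (S.erase b))
    rw [Finset.union_eq_right.2 hCe] at hkey
    have heq : insert b (insert a (S.erase b)) = insert a S := by
      rw [Finset.insert_comm, Finset.insert_erase hbS]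
    rw [heq] at hkey
    have hmono : M.rk S ≤ M.rk (insert a S) := M.rk_mono (Finset.subset_insert _ _)
    have hcard : (insert a (S.erase b)).card = S.card := by
      rw [Finset.card_insert_of_notMem
        (fun h => haS (Finset.mem_of_mem_erase h)), Finset.card_erase_of_mem hbS]
      have : S.card ≠ 0 := Finset.card_ne_zero_of_mem hbS
      omega
    exact basis_of_card_of_le (by omega) (by omega)

end RankMatroid

section CostLayer

variable {SS : Finset (Finset A)} {c : A → ℝ≥0∞}

lemma cstar_le {S : Finset A} (hS : S ∈ SS) : cstar SS c ≤ structCost c S :=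
  iInf₂_le S hS

lemma le_cstar {x : ℝ≥0∞} (h : ∀ S ∈ SS, x ≤ structCost c S) : x ≤ cstar SS c :=
  le_iInf₂ h

lemma cstar_attained (hne : SS.Nonempty) :
    ∃ S ∈ SS, cstar SS c = structCost c S ∧
      ∀ T ∈ SS, structCost c S ≤ structCost c T := by
  obtain ⟨S, hS, hmin⟩ := Finset.exists_min_image SS (structCost c) hne
  exact ⟨S, hS, le_antisymm (cstar_le hS) (le_cstar hmin), hmin⟩

lemma cstar_mono {c₁ c₂ : A → ℝ≥0∞} (h : ∀ a, c₁ a ≤ c₂ a) :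
    cstar SS c₁ ≤ cstar SS c₂ := by
  apply le_cstar
  intro S hS
  refine le_trans (cstar_le hS) ?_
  unfold structCost
  exact Finset.sum_le_sum fun i _ => h i

lemma structCost_eq_top {B : Finset A} {a : A} (ha : a ∈ B) (h : c a = ⊤) :
    structCost c B = ⊤ := by
  unfold structCost
  rw [ENNReal.sum_eq_top]
  exact ⟨a, ha, h⟩

lemma structCost_setCosts_of_disjoint {F E B : Finset A}
    (h : ∀ x ∈ B, x ∉ E) :
    structCost (setCosts c F E) B = ∑ x ∈ B \ F, c x := by
  unfold structCost
  have hcongr : ∀ x ∈ B, setCosts c F E x = if x ∈ F then 0 else c x := by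
    intro x hx
    simp only [setCosts, if_neg (h x hx)]
  rw [Finset.sum_congr rfl hcongr, Finset.sum_ite, Finset.sum_const_zero, zero_add,
    Finset.sdiff_eq_filter]

lemma structCost_ne_top {B : Finset A} (h : ∀ x, c x ≠ ⊤) :
    structCost c B ≠ ⊤ := by
  unfold structCost
  rw [Ne, ENNReal.sum_eq_top]
  push_neg
  exact fun x _ => h x

lemma sum_ne_top {B : Finset A} (h : ∀ x, c x ≠ ⊤) : (∑ x ∈ B, c x) ≠ ⊤ :=
  structCost_ne_top h

end CostLayer

/-- Claim A: there is a minimum basis for `setCosts c F ∅` containing `F`. -/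
lemma exists_min_basis_supset (M : RankMatroid A) {F : Finset A} (hF : M.Indep F)
    (c : A → ℝ≥0∞) :
    ∃ B ∈ M.bases, F ⊆ B ∧
      ∀ T ∈ M.bases, structCost (setCosts c F ∅) B ≤ structCost (setCosts c F ∅) T := by
  classical
  set c' := setCosts c F ∅ with hc'
  obtain ⟨B₀, hB₀, hmin₀⟩ := Finset.exists_min_image M.bases (structCost c')
    (RankMatroid.bases_nonempty (M := M))
  set mins := M.bases.filter (fun B => structCost c' B ≤ structCost c' B₀) with hmins
  have hne : mins.Nonempty := ⟨B₀, by simp [hmins, hB₀]⟩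
  obtain ⟨B, hBm, hmax⟩ := Finset.exists_max_image mins (fun B => (B ∩ F).card) hne
  rw [hmins, Finset.mem_filter] at hBm
  obtain ⟨hBb, hBle⟩ := hBm
  have hBmin : ∀ T ∈ M.bases, structCost c' B ≤ structCost c' T :=
    fun T hT => hBle.trans (hmin₀ T hT)
  refine ⟨B, hBb, ?_, hBmin⟩
  by_contra hFB
  obtain ⟨f, hfF, hfB⟩ := Finset.not_subset.1 hFB
  obtain ⟨b, hbB, hbF, hbasis⟩ := RankMatroid.exchange_into_indep hBb hfB hF hfF
  have hcost : structCost c' (insert f (B.erase b)) ≤ structCost c' B := by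
    have hf0 : c' f = 0 := by simp [hc', setCosts, hfF]
    unfold structCost
    rw [Finset.sum_insert (fun h => hfB (Finset.mem_of_mem_erase h)), hf0, zero_add]
    exact Finset.sum_le_sum_of_subset (Finset.erase_subset b B)
  have hmem : insert f (B.erase b) ∈ mins := by
    rw [hmins, Finset.mem_filter]
    exact ⟨hbasis, hcost.trans hBle⟩
  have hcap : (insert f (B.erase b) ∩ F) = insert f (B ∩ F) := by
    ext x
    simp only [Finset.mem_inter, Finset.mem_insert, Finset.mem_erase]
    constructor
    · rintro ⟨rfl | ⟨hxb, hxB⟩, hxF⟩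
      · exact Or.inl rfl
      · exact Or.inr ⟨hxB, hxF⟩
    · rintro (rfl | ⟨hxB, hxF⟩)
      · exact ⟨Or.inl rfl, hfF⟩
      · exact ⟨Or.inr ⟨fun h => hbF (h ▸ hxF), hxB⟩, hxF⟩
  have hcard : (insert f (B.erase b) ∩ F).card = (B ∩ F).card + 1 := by
    rw [hcap, Finset.card_insert_of_notMem (fun h => hfB (Finset.mem_inter.1 h).1)]
  have := hmax _ hmem
  omega

/-- Part 1: membership in a minimum basis implies the threshold inequality. -/
lemma vcg_part1 (M : RankMatroid A) {F S₂ : Finset A} (c₂ : A → ℝ≥0∞)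
    (hfin : ∀ a, c₂ a ≠ ⊤) (hS₂ : IsMinStruct M.bases c₂ S₂) (hFS : F ⊆ S₂)
    {a : A} (ha : a ∈ F) : c₂ a ≤ extVth M.bases c₂ F a := by
  classical
  obtain ⟨hS₂b, hS₂min⟩ := hS₂
  unfold extVth
  have hYne : cstar M.bases (setCosts c₂ F ∅) ≠ ⊤ := by
    refine ne_top_of_le_ne_top ?_ (cstar_le hS₂b)
    exact structCost_ne_top (fun x => by
      simp only [setCosts, Finset.notMem_empty, if_false]
      split <;> simp [hfin x])
  refine (ENNReal.cancel_of_ne hYne).le_tsub_of_add_le_right ?_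
  apply le_cstar
  intro B hB
  by_cases haB : a ∈ B
  · rw [structCost_eq_top haB (by simp [setCosts])]
    exact le_top
  · have hdisj : ∀ x ∈ B, x ∉ ({a} : Finset A) := by
      intro x hx
      simp only [Finset.mem_singleton]
      rintro rfl; exact haB hx
    rw [structCost_setCosts_of_disjoint hdisj]
    have hY : cstar M.bases (setCosts c₂ F ∅) ≤ ∑ x ∈ S₂ \ F, c₂ x :=
      (cstar_le hS₂b).trans_eq (structCost_setCosts_of_disjoint (by simp))
    refine le_trans (add_le_add_right hY _) ?_
    set w := ∑ x ∈ F.erase a, c₂ x with hw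
    have hwne : w ≠ ⊤ := sum_ne_top hfin
    rw [← ENNReal.add_le_add_iff_right hwne]
    have lhs : c₂ a + ∑ x ∈ S₂ \ F, c₂ x + w = structCost c₂ S₂ := by
      rw [hw]
      calc c₂ a + ∑ x ∈ S₂ \ F, c₂ x + ∑ x ∈ F.erase a, c₂ x
          = ∑ x ∈ S₂ \ F, c₂ x + (c₂ a + ∑ x ∈ F.erase a, c₂ x) := by ring
        _ = ∑ x ∈ S₂ \ F, c₂ x + ∑ x ∈ F, c₂ x := by
            rw [Finset.add_sum_erase F c₂ ha]
        _ = structCost c₂ S₂ := Finset.sum_sdiff hFS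
    have rhs : ∑ x ∈ B \ F.erase a, c₂ x + w = ∑ x ∈ B ∪ F.erase a, c₂ x := by
      rw [hw, ← Finset.union_sdiff_self B (F.erase a),
        Finset.sum_sdiff Finset.subset_union_right]
    rw [lhs, rhs]
    exact (hS₂min B hB).trans (Finset.sum_le_sum_of_subset Finset.subset_union_left)

/-- Part 2: strict threshold inequalities force membership in every minimum basis. -/
lemma vcg_part2 (M : RankMatroid A) {F S₂ : Finset A} (hF : M.Indep F)
    (c₂ : A → ℝ≥0∞) (hfin : ∀ a, c₂ a ≠ ⊤) (hS₂ : IsMinStruct M.bases c₂ S₂)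
    (hlt : ∀ a ∈ F, c₂ a < extVth M.bases c₂ F a) : F ⊆ S₂ := by
  classical
  obtain ⟨hS₂b, hS₂min⟩ := hS₂
  intro a ha
  by_contra haS
  obtain ⟨B, hBb, hFB, hBmin⟩ := exists_min_basis_supset M hF c₂
  have haB : a ∈ B := hFB ha
  obtain ⟨b, hbS, hbB, hB'b, hS'b⟩ := RankMatroid.symmetric_exchange hBb hS₂b haB haS
  have hbF : b ∉ F := fun h => hbB (hFB h)
  have hba : b ≠ a := fun h => haS (h ▸ hbS)
  set s := ∑ x ∈ B \ F, c₂ x with hs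
  have hsne : s ≠ ⊤ := sum_ne_top hfin
  have hsB : structCost (setCosts c₂ F ∅) B = s := structCost_setCosts_of_disjoint (by simp)
  have hY : cstar M.bases (setCosts c₂ F ∅) = s :=
    le_antisymm ((cstar_le hBb).trans_eq hsB)
      (le_cstar fun T hT => hsB ▸ hBmin T hT)
  have hXle : cstar M.bases (setCosts c₂ (F.erase a) {a}) ≤ c₂ b + s := by
    refine (cstar_le hB'b).trans ?_
    have hdisj : ∀ x ∈ insert b (B.erase a), x ∉ ({a} : Finset A) := by
      intro x hx
      simp only [Finset.mem_insert, Finset.mem_erase] at hx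
      simp only [Finset.mem_singleton]
      rintro rfl
      rcases hx with rfl | ⟨hxa, _⟩
      · exact hba rfl
      · exact hxa rfl
    rw [structCost_setCosts_of_disjoint hdisj]
    have hset : (insert b (B.erase a)) \ (F.erase a) = insert b (B \ F) := by
      ext x
      simp only [Finset.mem_sdiff, Finset.mem_insert, Finset.mem_erase]
      constructor
      · rintro ⟨rfl | ⟨hxa, hxB⟩, hxF⟩
        · exact Or.inl rfl
        · exact Or.inr ⟨hxB, fun h => hxF ⟨hxa, h⟩⟩
      · rintro (rfl | ⟨hxB, hxF⟩)
        · exact ⟨Or.inl rfl, fun h => hbF h.2⟩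
        · refine ⟨Or.inr ⟨fun h => hxF (h ▸ ha), hxB⟩, fun h => hxF h.2⟩
    rw [hset, Finset.sum_insert (fun h => hbB (Finset.mem_sdiff.1 h).1), hs]
  have hlt' := hlt a ha
  unfold extVth at hlt'
  rw [lt_tsub_iff_right, hY] at hlt'
  have h1 : c₂ a + s < c₂ b + s := lt_of_lt_of_le hlt' hXle
  have hab : c₂ a < c₂ b := by
    rwa [ENNReal.add_lt_add_iff_right hsne] at h1
  have h2 : structCost c₂ S₂ ≤ structCost c₂ (insert a (S₂.erase b)) := hS₂min _ hS'b
  have e1 : structCost c₂ S₂ = c₂ b + ∑ x ∈ S₂.erase b, c₂ x :=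
    (Finset.add_sum_erase _ _ hbS).symm
  have e2 : structCost c₂ (insert a (S₂.erase b)) = c₂ a + ∑ x ∈ S₂.erase b, c₂ x :=
    Finset.sum_insert (fun h => haS (Finset.mem_of_mem_erase h))
  rw [e1, e2] at h2
  have hterm : (∑ x ∈ S₂.erase b, c₂ x) ≠ ⊤ := sum_ne_top hfin
  have hle : c₂ b ≤ c₂ a := by
    rwa [ENNReal.add_le_add_iff_right hterm] at h2
  exact absurd hab (not_lt.2 hle)


/-- For a bridgeless matroid with all subset-sums of costs distinct,
an independent set `F` is contained in the (unique) minimum basis `S*` iff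
`c(a) ≤ V(F,a)` for all `a ∈ F`. Moreover, for arbitrary costs, `F ⊆ S*` implies
`c(a) ≤ V(F,a)` for all `a ∈ F`, and `c(a) < V(F,a)` for all `a ∈ F` implies `F ⊆ S*`. -/
theorem extended_vcg_threshold_characterization
    (M : RankMatroid A) (hM : M.Bridgeless)
    (F : Finset A) (hFindep : M.Indep F)
    (c : A → ℝ) (hc : ∀ a, 0 ≤ c a)
    (hdistinct : ∀ S T : Finset A, ∑ a ∈ S, c a = ∑ a ∈ T, c a → S = T)
    (Sstar : Finset A)
    (hS : IsMinStruct M.bases (fun a => ENNReal.ofReal (c a)) Sstar) :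
    (F ⊆ Sstar ↔ ∀ a ∈ F,
        ENNReal.ofReal (c a) ≤ extVth M.bases (fun b => ENNReal.ofReal (c b)) F a) ∧
    (∀ c₂ : A → ℝ≥0∞, (∀ a, c₂ a ≠ ⊤) →
      ∀ S₂ : Finset A, IsMinStruct M.bases c₂ S₂ →
        ((F ⊆ S₂ → ∀ a ∈ F, c₂ a ≤ extVth M.bases c₂ F a) ∧
         ((∀ a ∈ F, c₂ a < extVth M.bases c₂ F a) → F ⊆ S₂))) := by
  classical
  set c' : A → ℝ≥0∞ := fun b => ENNReal.ofReal (c b) with hc'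
  have hofR : ∀ a, c' a ≠ ⊤ := fun a => ENNReal.ofReal_ne_top
  refine ⟨⟨fun hsub a ha => vcg_part1 M c' hofR hS hsub ha, ?_⟩,
    fun c₂ hfin S₂ hS₂ => ⟨fun hsub a ha => vcg_part1 M c₂ hfin hS₂ hsub ha,
      fun hlt => vcg_part2 M hFindep c₂ hfin hS₂ hlt⟩⟩
  intro hle
  apply vcg_part2 M hFindep c' hofR hS
  intro a ha
  set X := cstar M.bases (setCosts c' (F.erase a) {a}) with hX
  set Y := cstar M.bases (setCosts c' F ∅) with hYdef
  have hsetfin : ∀ x, setCosts c' F ∅ x ≠ ⊤ := by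
    intro x
    simp only [setCosts, Finset.notMem_empty, if_false]
    split
    · exact (by simp : (0 : ℝ≥0∞) ≠ ⊤)
    · exact hofR x
  obtain ⟨B1, hB1, hY1, _⟩ := cstar_attained (c := setCosts c' F ∅)
    (RankMatroid.bases_nonempty (M := M))
  have hYne : Y ≠ ⊤ := by
    rw [hYdef, hY1]
    exact structCost_ne_top hsetfin
  have hYX : Y ≤ X := by
    apply cstar_mono
    intro x
    simp only [setCosts, Finset.notMem_empty, if_false, Finset.mem_singleton,
      Finset.mem_erase]
    by_cases hxa : x = a
    · simp [hxa]
    · simp only [if_neg hxa]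
      by_cases hxF : x ∈ F <;> simp [hxa, hxF]
  have hadd : c' a + Y ≤ X := by
    calc c' a + Y ≤ (X - Y) + Y := add_le_add_left (hle a ha) Y
      _ = X := tsub_add_cancel_of_le hYX
  rw [extVth, ← hX, ← hYdef, lt_tsub_iff_right]
  rcases eq_or_ne X ⊤ with hXtop | hXtop
  · rw [hXtop]
    exact ENNReal.add_lt_top.2 ⟨(hofR a).lt_top, hYne.lt_top⟩
  · refine lt_of_le_of_ne hadd ?_
    intro heq
    obtain ⟨B2, hB2, hX2, _⟩ := cstar_attained (c := setCosts c' (F.erase a) {a})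
      (RankMatroid.bases_nonempty (M := M))
    have haB2 : a ∉ B2 := by
      intro h
      rw [hX, hX2, structCost_eq_top h (by simp [setCosts])] at hXtop
      exact hXtop rfl
    have hXsum : X = ∑ x ∈ B2 \ F.erase a, c' x := by
      rw [hX, hX2]
      exact structCost_setCosts_of_disjoint (by
        intro x hx
        simp only [Finset.mem_singleton]
        rintro rfl
        exact haB2 hx)
    have hYsum : Y = ∑ x ∈ B1 \ F, c' x := by
      rw [hYdef, hY1]
      exact structCost_setCosts_of_disjoint (by simp)
    rw [hXsum, hYsum, hc'] at heq
    simp only [← ENNReal.ofReal_sum_of_nonneg (fun i _ => hc i)] at heq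
    rw [← ENNReal.ofReal_add (hc a) (Finset.sum_nonneg (fun i _ => hc i))] at heq
    have hreq : c a + ∑ x ∈ B1 \ F, c x = ∑ x ∈ B2 \ F.erase a, c x :=
      (ENNReal.ofReal_eq_ofReal_iff
        (add_nonneg (hc a) (Finset.sum_nonneg (fun i _ => hc i))) (Finset.sum_nonneg (fun i _ => hc i))).1 heq
    have haB1 : a ∉ B1 \ F := fun h => (Finset.mem_sdiff.1 h).2 ha
    rw [← Finset.sum_insert haB1] at hreq
    have hsets := hdistinct _ _ hreq
    have : a ∈ B2 \ F.erase a := hsets ▸ Finset.mem_insert_self a _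
    exact haB2 (Finset.mem_sdiff.1 this).1
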